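/- Let c be a Coxeter element in the Weyl group of an affine root system. The fixed space of the action of c on the dual space V* is the line spanned by φ_c, where φ_c ∈ V* is defined by ⟨φ_c, v⟩ = K(γ_c, v) for all v ∈ V. -/

import Mathlib

open scoped BigOperators

noncomputable section

/-- A symmetrizable generalized Cartan matrix of affine type, together with the
coefficient vector `dz` of the primitive positive imaginary root `δ` spanning the
(one dimensional) kernel of the associated symmetric bilinear form. -/
structure AffineGCM (n : ℕ) where
  /-- the generalized Cartan matrix -/
  a : Matrix (Fin n) (Fin n) ℤ
  /-- symmetrizing factors -/
  d : Fin n → ℝ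
  diag : ∀ i, a i i = 2
  offdiag : ∀ i j, i ≠ j → a i j ≤ 0
  d_pos : ∀ i, 0 < d i
  symmetrizable : ∀ i j, d i * (a i j : ℝ) = d j * (a j i : ℝ)
  /-- `K` is positive semidefinite (on the real span of the simple roots) -/
  posSemidef : ∀ g : Fin n → ℝ, 0 ≤ ∑ i, ∑ j, g i * g j * (d i * (a i j : ℝ))
  /-- `K` is not positive definite -/
  not_posDef : ∃ g : Fin n → ℝ, g ≠ 0 ∧ ∑ i, ∑ j, g i * g j * (d i * (a i j : ℝ)) = 0
  /-- the restriction of `K` to the span of every proper subset of the simple roots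
  is positive definite -/
  proper_posDef : ∀ J : Finset (Fin n), J ≠ Finset.univ →
    ∀ g : Fin n → ℝ, (∀ i, i ∉ J → g i = 0) → g ≠ 0 →
      0 < ∑ i, ∑ j, g i * g j * (d i * (a i j : ℝ))
  /-- coordinates of the positive imaginary root `δ` in the basis of simple roots -/
  dz : Fin n → ℤ
  dz_pos : ∀ i, 0 < dz i
  /-- `δ` is the imaginary root closest to the origin: its coordinates are coprime -/
  dz_prim : Finset.univ.gcd dz = 1
  /-- `δ` spans the kernel of `K` -/
  dz_ker : ∀ j, ∑ i, (dz i : ℝ) * (d i * (a i j : ℝ)) = 0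

namespace AffineGCM

variable {n : ℕ}

/-- The ambient vector space `V`, with the simple roots as standard basis. -/
abbrev V (n : ℕ) := Fin n → ℂ

/-- the simple root `α i` (the `i`-th standard basis vector) -/
def α (i : Fin n) : V n := Pi.single i 1

/-- a vector is *positive* if it lies in the nonnegative real span of the simple roots -/
def IsPosRoot (v : V n) : Prop := ∀ i, 0 ≤ (v i).re ∧ (v i).im = 0

/-- a vector is *negative* if it lies in the nonpositive real span of the simple roots -/
def IsNegRoot (v : V n) : Prop := ∀ i, (v i).re ≤ 0 ∧ (v i).im = 0

/-- the `g`-orbit of `x`: all `g ^ k • x` for integers `k` -/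
def orbit (g : V n ≃ₗ[ℂ] V n) (x : V n) : Set (V n) := Set.range fun k : ℤ => (g ^ k) x

/-- `U g`: the span of all eigenvectors of `g`, i.e. the direct sum of its eigenspaces -/
def eigSpan (g : V n ≃ₗ[ℂ] V n) : Submodule ℂ (V n) :=
  ⨆ μ : ℂ, Module.End.eigenspace (g : Module.End ℂ (V n)) μ

/-- the span `V_fin` of the simple roots other than `α aff` -/
def Vfin (aff : Fin n) : Submodule ℂ (V n) :=
  Submodule.span ℂ (α '' {i : Fin n | i ≠ aff})

variable (C : AffineGCM n)

/-- the simple coroot `α i ^ ∨ = (d i)⁻¹ • α i` -/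
def coroot (i : Fin n) : V n := ((C.d i : ℂ))⁻¹ • α i

/-- The symmetric bilinear form `K`, determined by `K (coroot i) (α j) = a i j`,
that is, `K (α i) (α j) = d i * a i j`. -/
def K : V n →ₗ[ℂ] V n →ₗ[ℂ] ℂ :=
  LinearMap.mk₂ ℂ
    (fun x y => ∑ i, ∑ j, x i * y j * ((C.d i : ℂ) * (C.a i j : ℂ)))
    (fun x x' y => by
      simp only [Pi.add_apply, add_mul, Finset.sum_add_distrib])
    (fun r x y => by
      simp only [Pi.smul_apply, smul_eq_mul, Finset.mul_sum]
      exact Finset.sum_congr rfl fun i _ => Finset.sum_congr rfl fun j _ => by ring)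
    (fun x y y' => by
      simp only [Pi.add_apply, mul_add, add_mul, Finset.sum_add_distrib])
    (fun r x y => by
      simp only [Pi.smul_apply, smul_eq_mul, Finset.mul_sum]
      exact Finset.sum_congr rfl fun i _ => Finset.sum_congr rfl fun j _ => by ring)

/-- the linear map `v ↦ v - K x v • y`; reflections are special cases -/
def reflMap (x y : V n) : V n →ₗ[ℂ] V n where
  toFun v := v - C.K x v • y
  map_add' u v := by simp only [map_add, add_smul]; abel
  map_smul' r u := by simp only [map_smul, smul_eq_mul, RingHom.id_apply, smul_sub, smul_smul]

lemma reflMap_apply (x y v : V n) : C.reflMap x y v = v - C.K x v • y := rfl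

/-- the simple reflection `s i` as a linear endomorphism -/
def sLin (i : Fin n) : V n →ₗ[ℂ] V n := C.reflMap (C.coroot i) (α i)

lemma K_α_α (i j : Fin n) : C.K (α i) (α j) = (C.d i : ℂ) * (C.a i j : ℂ) := by
  simp [K, α, LinearMap.mk₂_apply, Pi.single_apply, ite_mul, zero_mul,
    Finset.sum_ite_eq', Finset.mem_univ]

lemma K_coroot_α (i j : Fin n) : C.K (C.coroot i) (α j) = (C.a i j : ℂ) := by
  have hd : (C.d i : ℂ) ≠ 0 := by exact_mod_cast ne_of_gt (C.d_pos i)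
  simp only [coroot, map_smul, LinearMap.smul_apply, smul_eq_mul, K_α_α]
  field_simp

lemma sLin_invol (i : Fin n) (v : V n) : C.sLin i (C.sLin i v) = v := by
  have h2 : C.K (C.coroot i) (α i) = 2 := by
    rw [K_coroot_α, C.diag]; norm_num
  simp only [sLin, reflMap_apply, map_sub, map_smul, h2, smul_eq_mul]
  module

/-- the simple reflection `s i` -/
def s (i : Fin n) : V n ≃ₗ[ℂ] V n :=
  LinearEquiv.ofLinear (C.sLin i) (C.sLin i)
    (LinearMap.ext fun v => C.sLin_invol i v) (LinearMap.ext fun v => C.sLin_invol i v)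

/-- the Weyl group `W`, as a subgroup of the group of linear automorphisms of `V` -/
def Wgroup : Subgroup (V n ≃ₗ[ℂ] V n) := Subgroup.closure (Set.range C.s)

/-- the Coxeter element `c = s 1 * s 2 * ⋯ * s n` -/
def cox : V n ≃ₗ[ℂ] V n := (List.ofFn C.s).prod

/-- the positive imaginary root `δ` -/
def δv : V n := fun i => ((C.dz i : ℤ) : ℂ)

/-- the set of real roots: `W`-images of the simple roots -/
def realRoots : Set (V n) := {v | ∃ w ∈ C.Wgroup, ∃ i, w (α i) = v}

/-- the root system `Φ`: real roots together with the imaginary roots `k • δ`, `k ≠ 0` -/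
def Φ : Set (V n) := C.realRoots ∪ {v | ∃ k : ℤ, k ≠ 0 ∧ v = (k : ℂ) • C.δv}

/-- `T→ = {α 1, s 1 α 2, …, s 1 ⋯ s (n-1) α n}` -/
def Tproj : Set (V n) :=
  Set.range fun k : Fin n => ((List.ofFn C.s).take k.val).prod (α k)

/-- `T← = {α n, s n α (n-1), …, s n ⋯ s 2 α 1}` -/
def Tinj : Set (V n) :=
  Set.range fun k : Fin n => ((List.ofFn C.s).reverse.take (n - 1 - k.val)).prod (α k)

/-- `Φ_fin`, the finite root system `Φ ∩ V_fin` -/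
def Φfin (aff : Fin n) : Set (V n) := C.Φ ∩ (Vfin aff : Set (V n))

/-- the root `θ = δ - [δ : α aff] • α aff` of `Φ_fin` -/
def θv (aff : Fin n) : V n := C.δv - ((C.dz aff : ℤ) : ℂ) • α aff

/-- the reflection `t β : v ↦ v - K (β^∨) v • β` in a (real) root `β`,
where `β^∨ = (2 / K β β) • β` -/
def tRefl (β : V n) : V n →ₗ[ℂ] V n := C.reflMap ((2 / C.K β β) • β) β

/-- `c_◁ = s 1 * ⋯ * s (aff - 1)` -/
def cleft (aff : Fin n) : V n →ₗ[ℂ] V n := ((List.ofFn C.sLin).take aff.val).prod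

/-- `c_▷ = s (aff + 1) * ⋯ * s n` -/
def cright (aff : Fin n) : V n →ₗ[ℂ] V n := ((List.ofFn C.sLin).drop (aff.val + 1)).prod

/-- `Υ^fin = Φ_fin ∩ U c` -/
def Υfin (aff : Fin n) : Set (V n) := C.Φfin aff ∩ (eigSpan C.cox : Set (V n))

/-- `B` is a simple system for a set `Θ` of roots: a linearly independent subset of `Θ`
such that every element of `Θ` is a nonnegative or a nonpositive combination of `B`. -/
def IsSimpleSystem (Θ : Set (V n)) (B : Finset (V n)) : Prop :=
  ↑B ⊆ Θ ∧ LinearIndependent ℂ (fun b : B => (b : V n)) ∧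
    ∀ v ∈ Θ, ∃ g : V n → ℝ, ((∀ b ∈ B, 0 ≤ g b) ∨ (∀ b ∈ B, g b ≤ 0)) ∧
      v = ∑ b ∈ B, (g b : ℂ) • b

/-- two roots of `Θ` are connected if they are joined by a chain of roots of `Θ`
that are pairwise non-orthogonal (with respect to `K`) -/
def Connected (Θ : Set (V n)) (x y : V n) : Prop :=
  Relation.ReflTransGen (fun u v => u ∈ Θ ∧ v ∈ Θ ∧ C.K u v ≠ 0) x y

/-- the irreducible component of `x` in `Θ` -/
def component (Θ : Set (V n)) (x : V n) : Set (V n) := {y | y ∈ Θ ∧ C.Connected Θ x y}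

/-- a set of roots is of finite type `A` if it consists exactly of the vectors
`±(β i + β (i+1) + ⋯ + β j)` for a linearly independent family `β 1, …, β k` -/
def IsTypeA (Θ : Set (V n)) : Prop :=
  ∃ (k : ℕ) (β : Fin k → V n), LinearIndependent ℂ β ∧ (∀ i, β i ∈ Θ) ∧
    Θ = {v | ∃ i j : Fin k, i ≤ j ∧
      (v = ∑ l ∈ Finset.Icc i j, β l ∨ v = -∑ l ∈ Finset.Icc i j, β l)}

/-- `Ω = {β 1, t (β 1) (β 2), …, t (β 1) ⋯ t (β (m-1)) (β m)}` for an ordered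
tuple `β` of roots -/
def Ωset {m : ℕ} (β : Fin m → V n) : Set (V n) :=
  Set.range fun j : Fin m => (((List.ofFn fun i => C.tRefl (β i)).take j.val).prod) (β j)

/-- `s i` is initial in a Coxeter element `c` if `c` is the product of a permutation
of all the simple reflections starting with `s i` -/
def IsInitial (i : Fin n) (c : V n ≃ₗ[ℂ] V n) : Prop :=
  ∃ l : List (Fin n), (i :: l).Perm (List.finRange n) ∧ ((i :: l).map C.s).prod = c

/-- `s i` is final in a Coxeter element `c` if `c` is the product of a permutation
of all the simple reflections ending with `s i` -/
def IsFinal (i : Fin n) (c : V n ≃ₗ[ℂ] V n) : Prop :=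
  ∃ l : List (Fin n), (l ++ [i]).Perm (List.finRange n) ∧ ((l ++ [i]).map C.s).prod = c

/-- the skew-symmetric bilinear form `ω_c`, determined by
`ω_c (coroot i) (α j) = a i j` if `i > j`, `= 0` if `i = j`, `= -a i j` if `i < j` -/
def ω : V n →ₗ[ℂ] V n →ₗ[ℂ] ℂ :=
  LinearMap.mk₂ ℂ
    (fun x y => ∑ i, ∑ j, x i * y j *
      ((if j < i then 1 else if i = j then 0 else -1) * ((C.d i : ℂ) * (C.a i j : ℂ))))
    (fun x x' y => by
      simp only [Pi.add_apply, add_mul, Finset.sum_add_distrib])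
    (fun r x y => by
      simp only [Pi.smul_apply, smul_eq_mul, Finset.mul_sum]
      exact Finset.sum_congr rfl fun i _ => Finset.sum_congr rfl fun j _ => by ring)
    (fun x y y' => by
      simp only [Pi.add_apply, mul_add, add_mul, Finset.sum_add_distrib])
    (fun r x y => by
      simp only [Pi.smul_apply, smul_eq_mul, Finset.mul_sum]
      exact Finset.sum_congr rfl fun i _ => Finset.sum_congr rfl fun j _ => by ring)
/-!
The functional `φ_c = K γ_c` is `c`-invariant because `K` is `W`-invariant and `δ` lies in its
radical: `K γ (c v) = K (c γ - δ) (c v) = K γ v`. It is nonzero because `K` is positive definite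
on the real span of `Δ ∖ {α aff}`. The `c`-invariant functionals form the annihilator of the range
of `c - 1`, of the same dimension as the fixed space `ker (c - 1)`. A vector fixed by the product
of all simple reflections is fixed by each of them, so it lies in the radical of `K`, which is the
line `ℂ δ` by positive definiteness again. Hence the invariant functionals form a line, and it
contains `φ_c`.
-/

end AffineGCM

section DualFixed

open Module LinearMap

variable {𝕜 E : Type*} [Field 𝕜] [AddCommGroup E] [Module 𝕜 E]

lemma LinearMap.comp_linearEquiv_eq_self_iff {R M N : Type*} [Semiring R] [AddCommMonoid M]
    [AddCommMonoid N] [Module R M] [Module R N] (φ : M →ₗ[R] N) (e : M ≃ₗ[R] M) :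
    φ ∘ₗ e.toLinearMap = φ ↔ ∀ v, φ (e.symm v) = φ v := by
  rw [LinearMap.ext_iff, e.symm.surjective.forall]
  simp only [coe_comp, LinearEquiv.coe_coe, Function.comp_apply, LinearEquiv.apply_symm_apply,
    eq_comm]

theorem Module.Dual.comp_eq_self_iff_exists_eq_smul [FiniteDimensional 𝕜 E] {f : End 𝕜 E}
    (hf : finrank 𝕜 (ker (f - 1)) = 1) {ψ : Dual 𝕜 E} (hψ0 : ψ ≠ 0) (hψ : ψ ∘ₗ f = ψ)
    (φ : Dual 𝕜 E) : φ ∘ₗ f = φ ↔ ∃ t : 𝕜, φ = t • ψ := by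
  set A := (range (f - 1)).dualAnnihilator
  have mem_A (χ : Dual 𝕜 E) : χ ∈ A ↔ χ ∘ₗ f = χ := by
    simp [A, Submodule.mem_dualAnnihilator, LinearMap.ext_iff, sub_eq_zero]
  have hA : finrank 𝕜 A = 1 := by
    have h1 := Subspace.finrank_add_finrank_dualAnnihilator_eq (range (f - 1))
    have h2 := finrank_range_add_finrank_ker (f - 1)
    rw [hf] at h2
    linarith
  refine ⟨fun hφ => ?_, ?_⟩
  · obtain ⟨t, ht⟩ := (finrank_eq_one_iff_of_nonzero' (⟨ψ, (mem_A ψ).2 hψ⟩ : A)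
      (by simpa using hψ0)).1 hA ⟨φ, (mem_A φ).2 hφ⟩
    exact ⟨t, (congrArg Subtype.val ht).symm⟩
  · rintro ⟨t, rfl⟩
    rw [smul_comp, hψ]

end DualFixed

namespace AffineGCM

open Module

variable {n : ℕ} (C : AffineGCM n)

lemma K_apply (x y : V n) :
    C.K x y = ∑ i, ∑ j, x i * y j * ((C.d i : ℂ) * (C.a i j : ℂ)) := rfl

lemma K_symm (x y : V n) : C.K x y = C.K y x := by
  have hsymm (i j : Fin n) : (C.d i : ℂ) * (C.a i j : ℂ) = (C.d j : ℂ) * (C.a j i : ℂ) := by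
    exact_mod_cast congrArg ((↑) : ℝ → ℂ) (C.symmetrizable i j)
  rw [K_apply, K_apply, Finset.sum_comm]
  refine Finset.sum_congr rfl fun j _ => Finset.sum_congr rfl fun i _ => ?_
  rw [hsymm]
  ring

lemma K_coroot_apply (i : Fin n) (y : V n) :
    C.K (C.coroot i) y = ∑ j, y j * (C.a i j : ℂ) := by
  have hd : (C.d i : ℂ) ≠ 0 := by exact_mod_cast (C.d_pos i).ne'
  simp only [coroot, α, map_smul, LinearMap.smul_apply, K_apply, Pi.single_apply, ite_mul, one_mul,
    zero_mul, Finset.sum_ite_irrel, Finset.sum_const_zero, Finset.sum_ite_eq', Finset.mem_univ,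
    ↓reduceIte, smul_eq_mul, Finset.mul_sum]
  refine Finset.sum_congr rfl fun j _ => ?_
  field_simp

lemma K_δv (y : V n) : C.K C.δv y = 0 := by
  have hker (j : Fin n) : ∑ i, (C.dz i : ℂ) * ((C.d i : ℂ) * (C.a i j : ℂ)) = 0 := by
    exact_mod_cast congrArg ((↑) : ℝ → ℂ) (C.dz_ker j)
  rw [K_apply, Finset.sum_comm]
  refine Finset.sum_eq_zero fun j _ => ?_
  simp only [δv, mul_comm _ (y j), mul_assoc, ← Finset.mul_sum, hker, mul_zero]

lemma K_coroot_δv (i : Fin n) : C.K (C.coroot i) C.δv = 0 := by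
  rw [K_symm, K_δv]

lemma s_apply (i : Fin n) (v : V n) : C.s i v = v - C.K (C.coroot i) v • α i := rfl

lemma s_δv (i : Fin n) : C.s i C.δv = C.δv := by
  rw [s_apply, K_coroot_δv, zero_smul, sub_zero]

lemma K_s_s (i : Fin n) (x y : V n) : C.K (C.s i x) (C.s i y) = C.K x y := by
  have hd : (C.d i : ℂ) ≠ 0 := by exact_mod_cast (C.d_pos i).ne'
  have hα : α i = (C.d i : ℂ) • C.coroot i := by
    rw [coroot, smul_smul, mul_inv_cancel₀ hd, one_smul]
  have h1 : C.K x (α i) = (C.d i : ℂ) * C.K (C.coroot i) x := by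
    rw [K_symm, hα, map_smul, LinearMap.smul_apply, smul_eq_mul]
  have h2 : C.K (α i) y = (C.d i : ℂ) * C.K (C.coroot i) y := by
    rw [hα, map_smul, LinearMap.smul_apply, smul_eq_mul]
  have h3 : C.K (α i) (α i) = 2 * (C.d i : ℂ) := by
    rw [K_α_α, C.diag i]
    push_cast
    ring
  simp only [s_apply, map_sub, map_smul, LinearMap.sub_apply, LinearMap.smul_apply, smul_eq_mul,
    h1, h2, h3]
  ring

lemma cox_eq_prod : C.cox = ((List.finRange n).map C.s).prod := by
  simp only [cox, List.ofFn_eq_map]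

lemma K_prod_s (l : List (Fin n)) (x y : V n) :
    C.K ((l.map C.s).prod x) ((l.map C.s).prod y) = C.K x y := by
  induction l generalizing x y with
  | nil => simp
  | cons i l ih => simp only [List.map_cons, List.prod_cons, LinearEquiv.mul_apply, K_s_s, ih]

lemma K_cox (x y : V n) : C.K (C.cox x) (C.cox y) = C.K x y := by
  rw [cox_eq_prod, K_prod_s]

lemma prod_s_δv (l : List (Fin n)) : (l.map C.s).prod C.δv = C.δv := by
  induction l with
  | nil => simp
  | cons i l ih => simp only [List.map_cons, List.prod_cons, LinearEquiv.mul_apply, ih, s_δv]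

lemma cox_δv : C.cox C.δv = C.δv := by
  rw [cox_eq_prod, prod_s_δv]

lemma prod_s_apply_of_not_mem {l : List (Fin n)} {j : Fin n} (hj : j ∉ l) (v : V n) :
    (l.map C.s).prod v j = v j := by
  induction l generalizing v with
  | nil => simp
  | cons i l ih =>
    obtain ⟨hji, hjl⟩ := not_or.mp (List.mem_cons.not.mp hj)
    simp [LinearEquiv.mul_apply, s_apply, α, hji, ih hjl]

/-- A vector fixed by a product of distinct simple reflections is fixed by each factor:
the first factor `s i` only moves the `i`-th coordinate, which the others leave alone. -/
lemma K_coroot_eq_zero_of_prod_s_apply_eq {l : List (Fin n)} (hl : l.Nodup) {v : V n}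
    (hv : (l.map C.s).prod v = v) : ∀ i ∈ l, C.K (C.coroot i) v = 0 := by
  induction l with
  | nil => simp
  | cons i l ih =>
    obtain ⟨hil, hl⟩ := List.nodup_cons.mp hl
    set w := (l.map C.s).prod v
    have hsw : C.s i w = v := hv
    have hwi : w i = v i := C.prod_s_apply_of_not_mem hil v
    have hK : C.K (C.coroot i) w = 0 := by
      simpa [s_apply, α, hwi] using congrFun hsw i
    have hwv : w = v := by rw [← hsw, s_apply, hK, zero_smul, sub_zero]
    intro p hp
    rcases List.mem_cons.mp hp with rfl | hp
    · rwa [← hwv]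
    · exact ih hl hwv p hp

lemma eq_zero_of_sum_mul_a_eq_zero {x : Fin n → ℝ} {i₀ : Fin n} (hx₀ : x i₀ = 0)
    (hx : ∀ i, ∑ j, x j * C.a i j = 0) : x = 0 := by
  by_contra hne
  have hJ : Finset.univ.erase i₀ ≠ Finset.univ := fun h =>
    Finset.notMem_erase i₀ _ (h ▸ Finset.mem_univ i₀)
  have hpos := C.proper_posDef _ hJ x (fun i hi => by simp_all) hne
  have hQ : ∑ i, ∑ j, x i * x j * (C.d i * C.a i j) = 0 := by
    calc ∑ i, ∑ j, x i * x j * (C.d i * C.a i j)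
        = ∑ i, x i * C.d i * ∑ j, x j * C.a i j := by
          simp only [Finset.mul_sum]
          refine Finset.sum_congr rfl fun i _ => Finset.sum_congr rfl fun j _ => ?_
          ring
      _ = 0 := by simp [hx]
  exact hpos.ne' hQ

lemma eq_zero_of_K_coroot_eq_zero {w : V n} {i₀ : Fin n} (hw₀ : w i₀ = 0)
    (hw : ∀ i, C.K (C.coroot i) w = 0) : w = 0 := by
  have hre : (fun j => (w j).re) = 0 := C.eq_zero_of_sum_mul_a_eq_zero (i₀ := i₀)
    (by simp [hw₀]) fun i => by
      simpa [K_coroot_apply, Complex.re_sum] using congrArg Complex.re (hw i)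
  have him : (fun j => (w j).im) = 0 := C.eq_zero_of_sum_mul_a_eq_zero (i₀ := i₀)
    (by simp [hw₀]) fun i => by
      simpa [K_coroot_apply, Complex.im_sum] using congrArg Complex.im (hw i)
  funext j
  exact Complex.ext (congrFun hre j) (congrFun him j)

lemma δv_apply_ne_zero (i : Fin n) : C.δv i ≠ 0 := by
  simpa [δv] using (C.dz_pos i).ne'

lemma mem_span_δv_of_K_coroot_eq_zero {v : V n} (hv : ∀ i, C.K (C.coroot i) v = 0) :
    v ∈ Submodule.span ℂ {C.δv} := by
  cases isEmpty_or_nonempty (Fin n) with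
  | inl _ => simp [Subsingleton.elim v 0]
  | inr h =>
    obtain ⟨i₀⟩ := h
    have hδ := C.δv_apply_ne_zero i₀
    have hw : v - (v i₀ / C.δv i₀) • C.δv = 0 :=
      C.eq_zero_of_K_coroot_eq_zero (i₀ := i₀) (by simp [hδ])
        fun i => by simp [hv, K_coroot_δv]
    exact Submodule.mem_span_singleton.mpr ⟨_, (sub_eq_zero.mp hw).symm⟩

lemma ker_cox_sub_one : LinearMap.ker (C.cox.toLinearMap - 1) = Submodule.span ℂ {C.δv} := by
  apply le_antisymm
  · intro v hv
    have hfix : ((List.finRange n).map C.s).prod v = v := by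
      rw [← cox_eq_prod]
      simpa [sub_eq_zero] using hv
    exact C.mem_span_δv_of_K_coroot_eq_zero fun i =>
      C.K_coroot_eq_zero_of_prod_s_apply_eq (List.nodup_finRange n) hfix i (List.mem_finRange i)
  · rw [Submodule.span_le, Set.singleton_subset_iff, SetLike.mem_coe, LinearMap.mem_ker]
    simp [cox_δv]

lemma finrank_ker_cox_sub_one [Nonempty (Fin n)] :
    finrank ℂ (LinearMap.ker (C.cox.toLinearMap - 1)) = 1 := by
  obtain ⟨i⟩ := ‹Nonempty (Fin n)›
  rw [ker_cox_sub_one]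
  exact finrank_span_singleton fun h => C.δv_apply_ne_zero i (congrFun h i)

lemma apply_eq_zero_of_mem_Vfin {aff : Fin n} {v : V n} (hv : v ∈ Vfin aff) : v aff = 0 := by
  have hle : Vfin aff ≤ LinearMap.ker (LinearMap.proj aff : V n →ₗ[ℂ] ℂ) := by
    rw [Vfin, Submodule.span_le]
    rintro _ ⟨i, hi, rfl⟩
    simp [α, Ne.symm hi]
  simpa using hle hv

lemma K_ne_zero_of_mem_Vfin {aff : Fin n} {γ : V n} (hγ : γ ∈ Vfin aff) (hγ0 : γ ≠ 0) :
    C.K γ ≠ 0 := by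
  intro h
  refine hγ0 (C.eq_zero_of_K_coroot_eq_zero (apply_eq_zero_of_mem_Vfin hγ) fun i => ?_)
  rw [K_symm, h, LinearMap.zero_apply]

lemma K_comp_cox_of_cox_sub_self {γ : V n} (hγ : C.cox γ - γ = C.δv) :
    C.K γ ∘ₗ C.cox.toLinearMap = C.K γ := by
  refine LinearMap.ext fun v => ?_
  have hKcox := C.K_cox γ v
  rw [sub_eq_iff_eq_add.mp hγ, map_add, LinearMap.add_apply, K_δv, zero_add] at hKcox
  exact hKcox

theorem dual_fixed_space_general {n : ℕ} (C : AffineGCM n) (aff : Fin n)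
    (γ : V n) (hγ : γ ∈ Vfin aff) (hγ1 : C.cox γ - γ = C.δv) :
    ∀ φ : Module.Dual ℂ (V n), (∀ v, φ (C.cox.symm v) = φ v) ↔ ∃ t : ℂ, φ = t • C.K γ := by
  have : Nonempty (Fin n) := ⟨aff⟩
  have hγ0 : γ ≠ 0 := by
    rintro rfl
    exact C.δv_apply_ne_zero aff (by simp [← hγ1])
  intro φ
  rw [← LinearMap.comp_linearEquiv_eq_self_iff]
  exact Module.Dual.comp_eq_self_iff_exists_eq_smul C.finrank_ker_cox_sub_one
    (C.K_ne_zero_of_mem_Vfin hγ hγ0) (C.K_comp_cox_of_cox_sub_self hγ1) φ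

/-- Lemma 3.4: the fixed space of `c` acting on the dual space `V*` is the line
spanned by `φ_c = K (γ_c) ·`. -/
theorem dual_fixed_space {n : ℕ} (C : AffineGCM n) (aff : Fin n)
    (haff : ((Subgroup.closure (C.s '' {j : Fin n | j ≠ aff}) : Subgroup (V n ≃ₗ[ℂ] V n)) : Set (V n ≃ₗ[ℂ] V n)).Finite)
    (γ : V n) (hγ : γ ∈ Vfin aff) (hγ1 : C.cox γ - γ = C.δv) :
    ∀ φ : Module.Dual ℂ (V n), (∀ v, φ (C.cox.symm v) = φ v) ↔ ∃ t : ℂ, φ = t • C.K γ :=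
  dual_fixed_space_general C aff γ hγ hγ1

end AffineGCM
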